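/- Let H be a critical, non-circular 3-hypergraph with |V(H)| ≥ 5, and let C be a component of 𝒫(H) of odd order at least 3 (hence a path, with isomorphism φ_C from the path P_{v(C)} onto C). Then for every edge e ∈ E(H) with e ∩ V(C) ≠ ∅ and e \ V(C) ≠ ∅, there exists i ∈ {0,…,(v(C)−1)/2} such that e ∩ V(C) = {φ_C(2i)}. -/

import Mathlib

/-- `M` is a module of the hypergraph with vertex set `verts` and edge set `edges`. -/
def IsModule {α : Type*} [DecidableEq α] (verts : Finset α) (edges : Set (Finset α))
    (M : Finset α) : Prop :=
  M ⊆ verts ∧ ∀ e ∈ edges, (e ∩ M).Nonempty → (e \ M).Nonempty →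
    ∃ m ∈ M, e ∩ M = {m} ∧ ∀ n ∈ M, (e \ {m}) ∪ {n} ∈ edges

/-- `(verts, edges)` is a hypergraph: edges are nonempty subsets of `verts`. -/
def IsHypergraph {α : Type*} (verts : Finset α) (edges : Set (Finset α)) : Prop :=
  ∀ e ∈ edges, e ⊆ verts ∧ e.Nonempty

/-- `(verts, edges)` is a 3-hypergraph: edges are 3-element subsets of `verts`. -/
def Is3Hypergraph {α : Type*} (verts : Finset α) (edges : Set (Finset α)) : Prop :=
  ∀ e ∈ edges, e ⊆ verts ∧ e.card = 3

/-- Edges of the subhypergraph induced by `W`. -/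
def induceEdges {α : Type*} (W : Finset α) (edges : Set (Finset α)) : Set (Finset α) :=
  {e ∈ edges | e ⊆ W}

/-- A hypergraph is prime if it has at least 3 vertices and all its modules are trivial. -/
def IsPrime {α : Type*} [DecidableEq α] (verts : Finset α) (edges : Set (Finset α)) : Prop :=
  3 ≤ verts.card ∧ ∀ M, IsModule verts edges M → M = ∅ ∨ M = verts ∨ ∃ v, M = {v}

/-- A prime hypergraph is critical if removing any vertex destroys primality. -/
def IsCritical {α : Type*} [DecidableEq α] (verts : Finset α) (edges : Set (Finset α)) : Prop :=
  IsPrime verts edges ∧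
    ∀ v ∈ verts, ¬ IsPrime (verts.erase v) (induceEdges (verts.erase v) edges)

/-- Adjacency in the primality graph: `v ≠ w` and `H - {v, w}` is prime. -/
def PrimAdj {α : Type*} [DecidableEq α] (verts : Finset α) (edges : Set (Finset α))
    (v w : α) : Prop :=
  v ≠ w ∧ v ∈ verts ∧ w ∈ verts ∧
    IsPrime (verts \ {v, w}) (induceEdges (verts \ {v, w}) edges)


/-- `(verts, arc)` is a tournament: the arc relation is irreflexive and, on distinct
vertices of `verts`, exactly one of `arc x y`, `arc y x` holds. -/
def IsTournament {α : Type*} (verts : Finset α) (arc : α → α → Prop) : Prop :=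
  (∀ x, ¬ arc x x) ∧ ∀ x ∈ verts, ∀ y ∈ verts, x ≠ y → (arc x y ↔ ¬ arc y x)

/-- `M` is a module of the tournament `(verts, arc)`. -/
def TournMod {α : Type*} (verts : Finset α) (arc : α → α → Prop) (M : Finset α) : Prop :=
  M ⊆ verts ∧ ∀ x ∈ M, ∀ y ∈ M, ∀ v ∈ verts, arc x v → arc v y → v ∈ M

/-- The edge set of the C₃-structure of a tournament: the 3-sets inducing a 3-cycle. -/
def c3Edges {α : Type*} [DecidableEq α] (verts : Finset α) (arc : α → α → Prop) :
    Set (Finset α) :=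
  {e | ∃ x y z, x ∈ verts ∧ y ∈ verts ∧ z ∈ verts ∧
    x ≠ y ∧ y ≠ z ∧ x ≠ z ∧ arc x y ∧ arc y z ∧ arc z x ∧ e = {x, y, z}}

/-- Arc relation of the tournament `T_p` on `{0, …, p-1}`: obtained from the transitive
tournament (arcs `i j` for `i < j`) by reversing all arcs between even and odd vertices. -/
def arcT (i j : ℕ) : Prop :=
  (i < j ∧ i % 2 = j % 2) ∨ (j < i ∧ i % 2 ≠ j % 2)

/-- A 3-hypergraph is circular if its order is odd and it is isomorphic to
`C₃(T_{v(H)})`. -/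
def IsCircular {α : Type*} [DecidableEq α] (verts : Finset α) (edges : Set (Finset α)) : Prop :=
  Odd verts.card ∧ ∃ f : α → ℕ, Set.InjOn f verts ∧
    verts.image f = Finset.range verts.card ∧
    ∀ e : Finset α, e ⊆ verts →
      (e ∈ edges ↔ e.image f ∈ c3Edges (Finset.range verts.card) arcT)

/-!
Criticality forces local structure along the path `φ 0, …, φ (m-1)`. For an interior vertex
`φ (k+1)`, the nontrivial modules of `H - φ (k+1)` are pinned down by its two primality-graph
neighbours, and the only common shape is `{φ k, φ (k+2)}`. For an endpoint `φ 0` the same analysis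
forces every edge through `φ 1` to contain `φ 0` (a module `{φ 1, x}` would make `x` a second
neighbour of `φ 0`), and likewise at `φ (m-1)`.

An edge meeting the path in one or two vertices, but not contained in it, can then have its path
vertices slid by steps of two through the modules `{φ k, φ (k+2)}`. An odd extreme index slides
to an endpoint neighbour (`1` or `m - 2`, as `m` is odd) and contradicts the endpoint property;
two even indices slide to `p` and `p + 2` and then the module `{φ p, φ (p+2)}` of
`H - φ (p+1)` would meet the edge twice. So the edge meets the path in a single even vertex.
-/

open Finset

namespace IsModule

variable {α : Type*} [DecidableEq α] {V : Finset α} {E : Set (Finset α)} {M e : Finset α}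
  {a c : α}

theorem inter_eq_singleton (hM : IsModule V E M) (he : e ∈ E) (hout : (e \ M).Nonempty)
    (ha : a ∈ e) (haM : a ∈ M) : e ∩ M = {a} := by
  obtain ⟨m, -, hm, -⟩ := hM.2 e he ⟨a, mem_inter.2 ⟨ha, haM⟩⟩ hout
  obtain rfl : a = m := mem_singleton.1 (hm ▸ mem_inter.2 ⟨ha, haM⟩)
  exact hm

theorem eq_of_mem_edge (hM : IsModule V E M) (he : e ∈ E) (hout : (e \ M).Nonempty)
    (ha : a ∈ e) (haM : a ∈ M) (hc : c ∈ e) (hcM : c ∈ M) : c = a :=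
  mem_singleton.1 (hM.inter_eq_singleton he hout ha haM ▸ mem_inter.2 ⟨hc, hcM⟩)

theorem insert_erase_mem (hM : IsModule V E M) (he : e ∈ E) (hout : (e \ M).Nonempty)
    (ha : a ∈ e) (haM : a ∈ M) (hcM : c ∈ M) : insert c (e.erase a) ∈ E := by
  obtain ⟨m, -, hm, hswap⟩ := hM.2 e he ⟨a, mem_inter.2 ⟨ha, haM⟩⟩ hout
  obtain rfl : a = m := mem_singleton.1 (hm ▸ mem_inter.2 ⟨ha, haM⟩)
  rw [insert_eq, union_comm, ← sdiff_singleton_eq_erase]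
  exact hswap c hcM

theorem inter_induceEdges (hM : IsModule V E M) {W : Finset α} :
    IsModule W (induceEdges W E) (M ∩ W) := by
  refine ⟨inter_subset_right, fun e ⟨he, heW⟩ hin hout => ?_⟩
  have hinter : e ∩ (M ∩ W) = e ∩ M := by
    rw [← inter_assoc, inter_eq_left.2 (inter_subset_left.trans heW)]
  have hsdiff : e \ (M ∩ W) = e \ M := by
    rw [sdiff_inter_distrib_right, sdiff_eq_empty_iff_subset.2 heW, union_empty]
  rw [hinter] at hin
  rw [hsdiff] at hout
  obtain ⟨m, hmM, hm, hswap⟩ := hM.2 e he hin hout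
  have hme : m ∈ e := (mem_inter.1 (hm ▸ mem_singleton_self m)).1
  refine ⟨m, mem_inter.2 ⟨hmM, heW hme⟩, hinter ▸ hm, fun n hn => ⟨hswap n (mem_inter.1 hn).1, ?_⟩⟩
  exact union_subset (sdiff_subset.trans heW) (singleton_subset_iff.2 (mem_inter.1 hn).2)

theorem map_swap_mem {b x : α} (hM : IsModule V E {b, x}) (he : e ∈ E)
    (hout : (e \ {b, x}).Nonempty) : e.map (Equiv.swap b x).toEmbedding ∈ E := by
  by_cases hb : b ∈ e <;> by_cases hx : x ∈ e
  · obtain rfl := hM.eq_of_mem_edge he hout hb (by simp) hx (by simp)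
    simpa [Equiv.swap_self] using he
  · convert hM.insert_erase_mem he hout hb (by simp) (c := x) (by simp) using 1
    ext z; simp only [mem_map_equiv, Equiv.symm_swap, Equiv.swap_apply_def, mem_insert, mem_erase]
    grind
  · convert hM.insert_erase_mem he hout hx (by simp) (c := b) (by simp) using 1
    ext z; simp only [mem_map_equiv, Equiv.symm_swap, Equiv.swap_apply_def, mem_insert, mem_erase]
    grind
  · convert he using 1
    ext z; simp only [mem_map_equiv, Equiv.symm_swap, Equiv.swap_apply_def]
    grind

end IsModule

theorem induceEdges_induceEdges {α : Type*} {V W : Finset α} (hWV : W ⊆ V)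
    (E : Set (Finset α)) : induceEdges W (induceEdges V E) = induceEdges W E := by
  ext e
  exact ⟨fun h => ⟨h.1.1, h.2⟩, fun h => ⟨⟨h.1, h.2.trans hWV⟩, h.2⟩⟩

theorem IsPrime.of_equiv {α β : Type*} [DecidableEq α] [DecidableEq β] {V : Finset α}
    {E : Set (Finset α)} {W : Finset β} {F : Set (Finset β)} (σ : α ≃ β)
    (hVW : V.map σ.toEmbedding = W) (hEV : ∀ e ∈ E, e ⊆ V)
    (hEF : ∀ e ⊆ V, e ∈ E ↔ e.map σ.toEmbedding ∈ F) (hP : IsPrime V E) : IsPrime W F := by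
  refine ⟨hVW ▸ (card_map _).symm ▸ hP.1, fun M hM => ?_⟩
  set M₀ := M.map σ.symm.toEmbedding
  have hM₀ : IsModule V E M₀ := by
    refine ⟨map_symm_subset.2 (hVW ▸ hM.1), fun e he hin hout => ?_⟩
    have hmap : ∀ s : Finset α, s.map σ.toEmbedding ∩ M = (s ∩ M₀).map σ.toEmbedding ∧
        s.map σ.toEmbedding \ M = (s \ M₀).map σ.toEmbedding := fun s => by
      constructor <;> ext z <;> simp [M₀]
    obtain ⟨m, hm, hinter, hswap⟩ := hM.2 _ ((hEF e (hEV e he)).1 he)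
      ((hmap e).1 ▸ hin.map) ((hmap e).2 ▸ hout.map)
    refine ⟨σ.symm m, by simpa [M₀] using hm, ?_, fun n hn => ?_⟩
    · rw [← map_inj (f := σ.toEmbedding), ← (hmap e).1, hinter]
      simp
    · have hsub : (e \ {σ.symm m}) ∪ {n} ⊆ V :=
        union_subset (sdiff_subset.trans (hEV e he))
          (singleton_subset_iff.2 (map_symm_subset.2 (hVW ▸ hM.1) hn))
      refine (hEF _ hsub).2 ?_
      convert hswap (σ n) (by simpa [M₀] using hn) using 1
      ext z; simp
  have hM : M = M₀.map σ.toEmbedding := by ext z; simp [M₀]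
  rcases hP.2 M₀ hM₀ with h | h | ⟨v, h⟩ <;> rw [hM, h]
  · simp
  · exact Or.inr (Or.inl hVW)
  · exact Or.inr (Or.inr ⟨σ v, by simp⟩)

section PrimalityGraph

variable {α : Type*} [DecidableEq α] {verts : Finset α} {edges : Set (Finset α)}
  {a b c v w x : α} {e X : Finset α}

theorem pair_ne_sdiff_pair (h5 : 5 ≤ verts.card) (x y v w : α) :
    ({x, y} : Finset α) ≠ verts \ {v, w} := fun h => by
  have := card_le_card_sdiff_add_card (s := verts) (t := {v, w})
  have := card_le_two (a := v) (b := w)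
  have := card_le_two (a := x) (b := y)
  rw [← h] at *
  omega

theorem Is3Hypergraph.sdiff_nonempty (h3 : Is3Hypergraph verts edges) (he : e ∈ edges)
    {M : Finset α} (hM : M.card ≤ 2) : (e \ M).Nonempty := by
  rw [Finset.sdiff_nonempty]
  intro hsub
  have := card_le_card hsub
  rw [(h3 e he).2] at this
  omega

theorem Is3Hypergraph.mem_induceEdges_erase (h3 : Is3Hypergraph verts edges) (he : e ∈ edges)
    (hv : v ∉ e) : e ∈ induceEdges (verts.erase v) edges :=
  ⟨he, fun _ hz => mem_erase.2 ⟨fun h => hv (h ▸ hz), (h3 e he).1 hz⟩⟩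

theorem IsCritical.exists_nontrivial_module_erase (hc : IsCritical verts edges)
    (h4 : 4 ≤ verts.card) (hv : v ∈ verts) :
    ∃ X, IsModule (verts.erase v) (induceEdges (verts.erase v) edges) X ∧
      X.Nonempty ∧ X ≠ verts.erase v ∧ ∀ u, X ≠ {u} := by
  have hcard : 3 ≤ (verts.erase v).card := by rw [card_erase_of_mem hv]; omega
  have := hc.2 v hv
  simp only [IsPrime, hcard, true_and, not_forall] at this
  obtain ⟨X, hX, hX'⟩ := this
  simp only [not_or, ← nonempty_iff_ne_empty, not_exists] at hX'
  exact ⟨X, hX, hX'⟩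

/-- The trace of a module of `H - v` on `H - {v, w}` is trivial since `v ~ w`; this leaves two
shapes for a nontrivial one. -/
theorem PrimAdj.eq_pair_or_eq_sdiff (hvw : PrimAdj verts edges v w)
    (hX : IsModule (verts.erase v) (induceEdges (verts.erase v) edges) X)
    (hX0 : X.Nonempty) (hXV : X ≠ verts.erase v) (hX1 : ∀ u, X ≠ {u}) :
    (∃ x, X = {w, x}) ∨ X = verts \ {v, w} := by
  have hW : verts \ {v, w} ⊆ verts.erase v := fun z hz => by
    simp only [mem_sdiff, mem_insert, mem_singleton, not_or] at hz
    exact mem_erase.2 ⟨hz.2.1, hz.1⟩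
  have hrestr := hX.inter_induceEdges (W := verts \ {v, w})
  rw [induceEdges_induceEdges hW] at hrestr
  have hXW : X ∩ (verts \ {v, w}) = X.erase w := by
    ext z
    have := @hX.1 z
    simp only [mem_inter, mem_sdiff, mem_insert, mem_singleton, mem_erase] at this ⊢
    tauto
  rw [hXW] at hrestr
  rcases hvw.2.2.2.2 _ hrestr with h | h | ⟨x, h⟩
  · rcases (erase_eq_empty_iff X w).1 h with h | h
    · exact absurd h hX0.ne_empty
    · exact absurd h (hX1 w)
  · by_cases hw : w ∈ X
    · refine absurd ?_ hXV
      rw [← insert_erase hw, h]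
      ext z
      simp only [mem_insert, mem_sdiff, mem_singleton, mem_erase]
      have := hvw.1
      have := hvw.2.2.1
      grind
    · exact Or.inr (h ▸ (erase_eq_of_notMem hw).symm)
  · by_cases hw : w ∈ X
    · exact Or.inl ⟨x, by rw [← insert_erase hw, h]⟩
    · exact absurd ((erase_eq_of_notMem hw).symm.trans h) (hX1 x)

theorem PrimAdj.isModule_pair (hc : IsCritical verts edges) (h5 : 5 ≤ verts.card)
    (hba : PrimAdj verts edges b a) (hbc : PrimAdj verts edges b c) (hac : a ≠ c) :
    IsModule (verts.erase b) (induceEdges (verts.erase b) edges) {a, c} := by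
  obtain ⟨X, hX, hX0, hXV, hX1⟩ := hc.exists_nontrivial_module_erase (by omega) hba.2.1
  rcases hba.eq_pair_or_eq_sdiff hX hX0 hXV hX1, hbc.eq_pair_or_eq_sdiff hX hX0 hXV hX1 with
    ⟨⟨x, rfl⟩ | rfl, ⟨y, hy⟩ | hc'⟩
  · have hcX : c ∈ ({a, x} : Finset α) := hy ▸ mem_insert_self c {y}
    obtain rfl : c = x := by simpa [Ne.symm hac] using hcX
    exact hX
  · exact absurd hc' (pair_ne_sdiff_pair h5 _ _ _ _)
  · exact absurd hy.symm (pair_ne_sdiff_pair h5 _ _ _ _)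
  · have ha : a ∈ verts \ {b, c} := by
      simp [hba.2.2.1, hba.1.symm, hac]
    simp [← hc'] at ha

theorem IsModule.map_swap_mem_iff (h3 : Is3Hypergraph verts edges)
    (hM : IsModule (verts.erase a) (induceEdges (verts.erase a) edges) {b, x}) (hae : a ∉ e) :
    e.map (Equiv.swap b x).toEmbedding ∈ edges ↔ e ∈ edges := by
  have hσa : Equiv.swap b x a = a := by
    have := hM.1 (mem_insert_self b {x})
    have := hM.1 (mem_insert_of_mem (mem_singleton_self x))
    exact Equiv.swap_apply_of_ne_of_ne (by grind) (by grind)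
  have hswap : ∀ f, a ∉ f → f ∈ edges → f.map (Equiv.swap b x).toEmbedding ∈ edges :=
    fun f haf hf =>
      (hM.map_swap_mem (h3.mem_induceEdges_erase hf haf) (h3.sdiff_nonempty hf card_le_two)).1
  refine ⟨fun h => ?_, hswap e hae⟩
  have hinv : (e.map (Equiv.swap b x).toEmbedding).map (Equiv.swap b x).toEmbedding = e := by
    ext z; simp
  rw [← hinv]
  exact hswap _ (by simpa [hσa] using hae) h

/-- A module `{b, x}` of `H - a` makes the transposition `(b x)` an isomorphism from `H - {a, b}`
onto `H - {a, x}`. -/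
theorem PrimAdj.of_isModule_pair (h3 : Is3Hypergraph verts edges) (hab : PrimAdj verts edges a b)
    (hM : IsModule (verts.erase a) (induceEdges (verts.erase a) edges) {b, x}) :
    PrimAdj verts edges a x := by
  obtain ⟨hxa, hxv⟩ := mem_erase.1 (hM.1 (mem_insert_of_mem (mem_singleton_self x)))
  obtain ⟨hab, ha, hb, hprime⟩ := hab
  have hVW : (verts \ {a, b}).map (Equiv.swap b x).toEmbedding = verts \ {a, x} := by
    ext z
    simp only [mem_map_equiv, Equiv.symm_swap, Equiv.swap_apply_def, mem_sdiff, mem_insert,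
      mem_singleton]
    grind
  refine ⟨hxa.symm, ha, hxv, hprime.of_equiv _ hVW (fun e he => he.2) fun e he => ?_⟩
  have hae : a ∉ e := fun h => by simpa using he h
  rw [← hVW]
  exact and_congr (hM.map_swap_mem_iff h3 hae).symm map_subset_map.symm

theorem PrimAdj.mem_of_mem_of_unique (h3 : Is3Hypergraph verts edges) (hc : IsCritical verts edges)
    (h5 : 5 ≤ verts.card) (hab : PrimAdj verts edges a b)
    (huniq : ∀ x, PrimAdj verts edges a x → x = b) (he : e ∈ edges) (hbe : b ∈ e) : a ∈ e := by
  obtain ⟨X, hX, hX0, hXV, hX1⟩ := hc.exists_nontrivial_module_erase (by omega) hab.2.1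
  rcases hab.eq_pair_or_eq_sdiff hX hX0 hXV hX1 with ⟨x, rfl⟩ | rfl
  · obtain rfl := huniq x (hab.of_isModule_pair h3 hX)
    exact absurd (pair_eq_singleton x) (hX1 x)
  · by_contra hae
    have hinter : e ∩ (verts \ {a, b}) = e.erase b := by
      ext z
      have := @(h3 e he).1 z
      simp only [mem_inter, mem_sdiff, mem_insert, mem_singleton, mem_erase]
      grind
    have hcard : (e.erase b).card = 2 := by rw [card_erase_of_mem hbe, (h3 e he).2]
    obtain ⟨m, -, hm, -⟩ := hX.2 e (h3.mem_induceEdges_erase he hae)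
      (hinter ▸ card_pos.1 (by omega)) ⟨b, by simp [hbe]⟩
    rw [hinter] at hm
    simp [hm] at hcard

def IsModularPath (verts : Finset α) (edges : Set (Finset α)) (m : ℕ) (φ : ℕ → α) : Prop :=
  Set.InjOn φ (Set.Iio m) ∧ ∀ k, k + 2 < m →
    IsModule (verts.erase (φ (k + 1))) (induceEdges (verts.erase (φ (k + 1))) edges)
      {φ k, φ (k + 2)}

namespace IsModularPath

variable {m : ℕ} {φ : ℕ → α}

theorem injective (hP : IsModularPath verts edges m φ) {i j : ℕ} (hi : i < m) (hj : j < m) :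
    φ i = φ j ↔ i = j :=
  hP.1.eq_iff hi hj

theorem reverse (hP : IsModularPath verts edges m φ) :
    IsModularPath verts edges m (fun i => φ (m - 1 - i)) := by
  refine ⟨fun i hi j hj h => ?_, fun k hk => ?_⟩
  · simp only [Set.mem_Iio] at hi hj
    have := (hP.injective (i := m - 1 - i) (j := m - 1 - j) (by omega) (by omega)).1 h
    omega
  · have := hP.2 (m - 3 - k) (by omega)
    rwa [show m - 3 - k + 1 = m - 1 - (k + 1) by omega, show m - 3 - k + 2 = m - 1 - k by omega,
      show m - 3 - k = m - 1 - (k + 2) by omega, pair_comm] at this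

theorem mem_of_mem_of_mem (h3 : Is3Hypergraph verts edges) (hP : IsModularPath verts edges m φ)
    {k : ℕ} (hk : k + 2 < m) (he : e ∈ edges) (h0 : φ k ∈ e) (h2 : φ (k + 2) ∈ e) :
    φ (k + 1) ∈ e := by
  by_contra h1
  have := (hP.2 k hk).eq_of_mem_edge (h3.mem_induceEdges_erase he h1)
    (h3.sdiff_nonempty he card_le_two) h0 (by simp) h2 (by simp)
  have := (hP.injective hk (by omega)).1 this
  omega

theorem insert_erase_mem (h3 : Is3Hypergraph verts edges) (hP : IsModularPath verts edges m φ)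
    {j t : ℕ} (hjt : j + 2 * t < m) (he : e ∈ edges) (hmem : φ (j + 2 * t) ∈ e)
    (hfree : ∀ i, j ≤ i → i < j + 2 * t → φ i ∉ e) :
    insert (φ j) (e.erase (φ (j + 2 * t))) ∈ edges := by
  induction t generalizing e with
  | zero =>
    rw [mul_zero, add_zero] at hmem ⊢
    rwa [insert_erase hmem]
  | succ t ih =>
    set q := j + 2 * t
    have hq2 : j + 2 * (t + 1) = q + 2 := by omega
    rw [hq2] at hmem hjt ⊢
    have hq1 : φ (q + 1) ∉ e := hfree _ (by omega) (by omega)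
    have hq0 : φ q ∉ e := hfree _ (by omega) (by omega)
    have he₁ : insert (φ q) (e.erase (φ (q + 2))) ∈ edges :=
      ((hP.2 q hjt).insert_erase_mem (h3.mem_induceEdges_erase he hq1)
        (h3.sdiff_nonempty he card_le_two) hmem (by simp) (by simp)).1
    have hfree₁ : ∀ i, j ≤ i → i < q → φ i ∉ insert (φ q) (e.erase (φ (q + 2))) := by
      intro i hji hiq h
      rcases mem_insert.1 h with h | h
      · exact absurd ((hP.injective (by omega) (by omega)).1 h) (by omega)
      · exact hfree i hji (by omega) (mem_of_mem_erase h)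
    have := ih (by omega) he₁ (mem_insert_self _ _) hfree₁
    rwa [erase_insert fun h => hq0 (mem_of_mem_erase h)] at this

theorem even_of_forall_lt_notMem (h3 : Is3Hypergraph verts edges)
    (hP : IsModularPath verts edges m φ) (hend : ∀ f ∈ edges, φ 1 ∈ f → φ 0 ∈ f)
    {j : ℕ} (hj : j < m) (he : e ∈ edges) (hmem : φ j ∈ e) (hmin : ∀ i < j, φ i ∉ e) :
    Even j := by
  by_contra hodd
  obtain ⟨t, rfl⟩ : ∃ t, j = 1 + 2 * t := ⟨j / 2, by grind⟩
  have he₁ := hP.insert_erase_mem h3 hj he hmem fun i _ hi => hmin i hi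
  have h0 := hend _ he₁ (mem_insert_self _ _)
  rcases mem_insert.1 h0 with h | h
  · exact absurd ((hP.injective (by omega) (by omega)).1 h) (by omega)
  · exact hmin 0 (by omega) (mem_of_mem_erase h)

theorem even_of_forall_gt_notMem (h3 : Is3Hypergraph verts edges)
    (hP : IsModularPath verts edges m φ) (hm : Odd m)
    (hend : ∀ f ∈ edges, φ (m - 2) ∈ f → φ (m - 1) ∈ f)
    {j : ℕ} (hj : j < m) (he : e ∈ edges) (hmem : φ j ∈ e) (hmax : ∀ i, j < i → i < m → φ i ∉ e) :
    Even j := by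
  have := hP.reverse.even_of_forall_lt_notMem h3 (by simpa [Nat.sub_sub] using hend)
    (j := m - 1 - j) (by omega) he (by rwa [show m - 1 - (m - 1 - j) = j by omega])
    fun i hi => hmax _ (by omega) (by omega)
  rw [Nat.even_sub (by omega), Nat.even_sub (by omega)] at this
  grind

theorem false_of_mem_of_mem (h3 : Is3Hypergraph verts edges) (hP : IsModularPath verts edges m φ)
    {p t : ℕ} (hpt : p + 2 + 2 * t < m) (he : e ∈ edges) (hp : φ p ∈ e)
    (hq : φ (p + 2 + 2 * t) ∈ e) (hfree : ∀ i, p < i → i < p + 2 + 2 * t → φ i ∉ e) : False := by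
  have he₁ := hP.insert_erase_mem h3 hpt he hq fun i hi hi' => hfree i (by omega) hi'
  have hp₁ : φ p ∈ insert (φ (p + 2)) (e.erase (φ (p + 2 + 2 * t))) :=
    mem_insert_of_mem (mem_erase.2 ⟨fun h => by
      have := (hP.injective (by omega) hpt).1 h; omega, hp⟩)
  have h1 := hP.mem_of_mem_of_mem h3 (by omega) he₁ hp₁ (mem_insert_self _ _)
  rcases mem_insert.1 h1 with h | h
  · exact absurd ((hP.injective (by omega) (by omega)).1 h) (by omega)
  · exact hfree (p + 1) (by omega) (by omega) (mem_of_mem_erase h)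

theorem even_and_eq_of_forall_mem_iff (h3 : Is3Hypergraph verts edges)
    (hP : IsModularPath verts edges m φ) (hm : Odd m)
    (hend₀ : ∀ f ∈ edges, φ 1 ∈ f → φ 0 ∈ f) (hend₁ : ∀ f ∈ edges, φ (m - 2) ∈ f → φ (m - 1) ∈ f)
    (he : e ∈ edges) {p q : ℕ} (hp : p < m) (hq : q < m)
    (htrace : ∀ i < m, φ i ∈ e ↔ i = p ∨ i = q) : Even p ∧ p = q := by
  wlog hpq : p ≤ q generalizing p q
  · obtain ⟨hq, rfl⟩ := this hq hp (fun i hi => (htrace i hi).trans or_comm) (by omega)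
    exact ⟨hq, rfl⟩
  have hpe : Even p := hP.even_of_forall_lt_notMem h3 hend₀ hp he ((htrace p hp).2 (Or.inl rfl))
    fun i hi h => by have := (htrace i (by omega)).1 h; omega
  have hqe : Even q := hP.even_of_forall_gt_notMem h3 hm hend₁ hq he
    ((htrace q hq).2 (Or.inr rfl)) fun i hi hi' h => by have := (htrace i hi').1 h; omega
  refine ⟨hpe, by_contra fun hne => ?_⟩
  obtain ⟨t, rfl⟩ : ∃ t, q = p + 2 + 2 * t := by
    obtain ⟨a, rfl⟩ := hpe
    obtain ⟨b, rfl⟩ := hqe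
    exact ⟨b - a - 1, by omega⟩
  exact hP.false_of_mem_of_mem h3 hq he ((htrace p hp).2 (Or.inl rfl))
    ((htrace _ hq).2 (Or.inr rfl)) fun i hi hi' h => by have := (htrace i (by omega)).1 h; omega

end IsModularPath

end PrimalityGraph

theorem exists_inter_image_eq_pair {α : Type*} [DecidableEq α] {m : ℕ} {φ : ℕ → α}
    (hinj : Set.InjOn φ (Set.Iio m)) {e : Finset α} (hne : (e ∩ (range m).image φ).Nonempty)
    (hcard : (e ∩ (range m).image φ).card ≤ 2) :
    ∃ p < m, ∃ q < m, e ∩ (range m).image φ = {φ p, φ q} ∧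
      ∀ i < m, φ i ∈ e ↔ i = p ∨ i = q := by
  obtain ⟨x, y, hxy⟩ : ∃ x y, e ∩ (range m).image φ = {x, y} := by
    obtain h | h : (e ∩ (range m).image φ).card = 1 ∨ (e ∩ (range m).image φ).card = 2 := by
      have := hne.card_pos
      omega
    · obtain ⟨x, hx⟩ := card_eq_one.1 h
      exact ⟨x, x, by rw [pair_eq_singleton, hx]⟩
    · obtain ⟨x, y, -, hxy⟩ := card_eq_two.1 h
      exact ⟨x, y, hxy⟩
  have hx : x ∈ e ∩ (range m).image φ := by simp [hxy]
  have hy : y ∈ e ∩ (range m).image φ := by simp [hxy]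
  obtain ⟨p, hp, rfl⟩ := mem_image.1 (mem_inter.1 hx).2
  obtain ⟨q, hq, rfl⟩ := mem_image.1 (mem_inter.1 hy).2
  rw [mem_range] at hp hq
  refine ⟨p, hp, q, hq, hxy, fun i hi => ?_⟩
  have hiC : φ i ∈ (range m).image φ := mem_image_of_mem φ (mem_range.2 hi)
  rw [show φ i ∈ e ↔ φ i ∈ e ∩ (range m).image φ by simp [hiC], hxy, mem_insert, mem_singleton,
    hinj.eq_iff hi hp, hinj.eq_iff hi hq]

theorem odd_path_component_meets_edges_in_even_vertex_general {α : Type*} [DecidableEq α]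
    (verts : Finset α) (edges : Set (Finset α)) (h3 : Is3Hypergraph verts edges)
    (hc : IsCritical verts edges) (h5 : 5 ≤ verts.card)
    (m : ℕ) (φ : ℕ → α) (hinj : Set.InjOn φ (Set.Iio m))
    (hpath : ∀ i < m, ∀ j < m, (PrimAdj verts edges (φ i) (φ j) ↔ (j = i + 1 ∨ i = j + 1)))
    (hclosed : ∀ i < m, ∀ w, PrimAdj verts edges (φ i) w → ∃ j < m, w = φ j)
    (hm3 : 3 ≤ m) (hmodd : Odd m) :
    ∀ e ∈ edges, (e ∩ (Finset.range m).image φ).Nonempty →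
      (e \ (Finset.range m).image φ).Nonempty →
      ∃ i, 2 * i < m ∧ e ∩ (Finset.range m).image φ = {φ (2 * i)} := by
  have hP : IsModularPath verts edges m φ := ⟨hinj, fun k hk =>
    ((hpath (k + 1) (by omega) k (by omega)).2 (by omega)).isModule_pair hc h5
      ((hpath (k + 1) (by omega) (k + 2) hk).2 (by omega)) fun h => by
        have := hinj (show k < m by omega) hk h; omega⟩
  have hend : ∀ i j, i < m → PrimAdj verts edges (φ i) (φ j) →
      (∀ k < m, PrimAdj verts edges (φ i) (φ k) → k = j) →
      ∀ f ∈ edges, φ j ∈ f → φ i ∈ f := fun i j hi hij huniq f hf =>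
    hij.mem_of_mem_of_unique h3 hc h5 (fun x hx => by
      obtain ⟨k, hk, rfl⟩ := hclosed i hi x hx
      rw [huniq k hk hx]) hf
  have hend₀ := hend 0 1 (by omega) ((hpath 0 (by omega) 1 (by omega)).2 (by omega))
    fun k hk h => by have := (hpath 0 (by omega) k hk).1 h; omega
  have hend₁ := hend (m - 1) (m - 2) (by omega)
    ((hpath (m - 1) (by omega) (m - 2) (by omega)).2 (by omega))
    fun k hk h => by have := (hpath (m - 1) (by omega) k hk).1 h; omega
  intro e he hin hout
  have hcard : (e ∩ (range m).image φ).card ≤ 2 := by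
    have := card_inter_add_card_sdiff e ((range m).image φ)
    have := hout.card_pos
    have := (h3 e he).2
    omega
  obtain ⟨p, hp, q, hq, heq, htrace⟩ := exists_inter_image_eq_pair hinj hin hcard
  obtain ⟨⟨i, rfl⟩, rfl⟩ := hP.even_and_eq_of_forall_mem_iff h3 hmodd hend₀ hend₁ he hp hq htrace
  exact ⟨i, by omega, by rw [heq, pair_eq_singleton, two_mul]⟩

theorem odd_path_component_meets_edges_in_even_vertex {α : Type*} [DecidableEq α]
    (verts : Finset α) (edges : Set (Finset α)) (h3 : Is3Hypergraph verts edges)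
    (hc : IsCritical verts edges) (h5 : 5 ≤ verts.card)
    (hnc : ¬ IsCircular verts edges)
    (m : ℕ) (φ : ℕ → α) (hinj : Set.InjOn φ (Set.Iio m))
    (hsub : (Finset.range m).image φ ⊆ verts)
    (hpath : ∀ i < m, ∀ j < m, (PrimAdj verts edges (φ i) (φ j) ↔ (j = i + 1 ∨ i = j + 1)))
    (hclosed : ∀ i < m, ∀ w, PrimAdj verts edges (φ i) w → ∃ j < m, w = φ j)
    (hm3 : 3 ≤ m) (hmodd : Odd m) :
    ∀ e ∈ edges, (e ∩ (Finset.range m).image φ).Nonempty →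
      (e \ (Finset.range m).image φ).Nonempty →
      ∃ i, 2 * i < m ∧ e ∩ (Finset.range m).image φ = {φ (2 * i)} :=
  odd_path_component_meets_edges_in_even_vertex_general verts edges h3 hc h5 m φ hinj hpath hclosed
    hm3 hmodd
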